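/- For every positive real x, the series Σ_{k=1}^∞ 2^{k-1} (x^{2^{-k}} - 1)^2 converges and its sum equals x - 1 - log x. -/

import Mathlib

/-!
With `a k = (x ^ t - 1) / t` at `t = 2⁻ᵏ`, the substitution `y = x ^ (t / 2)` gives
`a k - a (k + 1) = 2 ^ k * (y - 1) ^ 2`, so the series telescopes to `a 0 - lim a`.
Here `a 0 = x - 1`, and `a k → log x` because `(x ^ t - 1) / t` is a difference quotient
of `t ↦ x ^ t` at `0`.
-/

open Real Filter Finset Topology

theorem Antitone.hasSum_sub_succ {f : ℕ → ℝ} {l : ℝ} (hf : Antitone f)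
    (hl : Tendsto f atTop (𝓝 l)) : HasSum (fun k => f k - f (k + 1)) (f 0 - l) := by
  rw [hasSum_iff_tendsto_nat_of_nonneg fun k => sub_nonneg.2 (hf k.le_succ)]
  simpa only [sum_range_sub'] using tendsto_const_nhds.sub hl

theorem tendsto_rpow_sub_one_div_nhdsNE {x : ℝ} (hx : 0 < x) :
    Tendsto (fun t : ℝ => (x ^ t - 1) / t) (𝓝[≠] 0) (𝓝 (log x)) := by
  have h := hasDerivAt_iff_tendsto_slope.1 (hasStrictDerivAt_const_rpow hx 0).hasDerivAt
  rw [rpow_zero, one_mul] at h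
  refine h.congr fun t => ?_
  rw [slope_def_field, rpow_zero, sub_zero]

theorem tendsto_inv_two_pow_nhdsGT_zero :
    Tendsto (fun k : ℕ => ((2 : ℝ) ^ k)⁻¹) atTop (𝓝[>] 0) :=
  tendsto_inv_atTop_nhdsGT_zero.comp (tendsto_pow_atTop_atTop_of_one_lt one_lt_two)

theorem rpow_two_mul_sub_one_div_sub {x : ℝ} (hx : 0 ≤ x) {s : ℝ} (hs : s ≠ 0) :
    (x ^ (2 * s) - 1) / (2 * s) - (x ^ s - 1) / s = (x ^ s - 1) ^ 2 / (2 * s) := by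
  rw [mul_comm 2 s, rpow_mul hx, rpow_two]
  field_simp
  ring

theorem hasSum_log_series (x : ℝ) (hx : 0 < x) :
    HasSum (fun k : ℕ => (2 : ℝ) ^ k * (x ^ ((2 : ℝ) ^ (-((k : ℝ) + 1))) - 1) ^ 2)
      (x - 1 - Real.log x) := by
  set a : ℕ → ℝ := fun k => (x ^ ((2 : ℝ) ^ k)⁻¹ - 1) / ((2 : ℝ) ^ k)⁻¹
  have hterm : ∀ k : ℕ,
      (2 : ℝ) ^ k * (x ^ ((2 : ℝ) ^ (-((k : ℝ) + 1))) - 1) ^ 2 = a k - a (k + 1) := by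
    intro k
    have hs : (2 : ℝ) ^ (-((k : ℝ) + 1)) = ((2 : ℝ) ^ (k + 1))⁻¹ := by
      rw [rpow_neg zero_le_two, ← Nat.cast_add_one, rpow_natCast]
    have h2s : ((2 : ℝ) ^ k)⁻¹ = 2 * ((2 : ℝ) ^ (k + 1))⁻¹ := by
      rw [pow_succ]; field_simp
    have hs0 : ((2 : ℝ) ^ (k + 1))⁻¹ ≠ 0 := by positivity
    simp only [a, hs, h2s, rpow_two_mul_sub_one_div_sub hx.le hs0]
    rw [pow_succ]
    field_simp
    ring
  have hanti : Antitone a := antitone_nat_of_succ_le fun k => by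
    rw [← sub_nonneg, ← hterm]; positivity
  have hlim : Tendsto a atTop (𝓝 (log x)) :=
    (tendsto_rpow_sub_one_div_nhdsNE hx).comp
      (tendsto_nhdsWithin_mono_right (fun _ ht => ne_of_gt ht) tendsto_inv_two_pow_nhdsGT_zero)
  convert hanti.hasSum_sub_succ hlim using 1
  · exact funext hterm
  · simp [a]
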